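/- arXiv:2308.07715 — 5 statements merged into one kernel-verified Lean document; each statement's English description precedes it below -/
import Mathlib

section
/- Consider the cumulative (Madow) arrangement: with c_0 = 0 and c_k = c_{k-1} + π_k, unit k's bar is the set B_k = {x ∈ [0,1) : frac(c_{k-1}) ≤ x < frac(c_{k-1}) + π_k mod 1} i.e. the image of [c_{k-1}, c_k) under reduction modulo 1 (wrapping around at 1). If the total n = Σ_k π_k is a positive integer and r is uniform on [0,1), then the sample size |{k : r ∈ B_k}| equals n with probability 1. -/
/-!
Each bar is the wrapped interval of length `π k ≤ 1` starting at `c k`, so `r` lies in it exactly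
when `⌊r - c k⌋ - ⌊r - c (k+1)⌋ = 1` (and otherwise this difference is `0`). Summing over `k`
telescopes to `⌊r - c 0⌋ - ⌊r - c N⌋ = 0 - (-n) = n` for every `r ∈ [0,1)`.
-/

theorem Int.floor_sub_floor_sub_eq_ite {α : Type*} [CommRing α] [LinearOrder α]
    [IsStrictOrderedRing α] [FloorRing α] {x p : α} (hp0 : 0 ≤ p) (hp1 : p ≤ 1) :
    ⌊x⌋ - ⌊x - p⌋ = if Int.fract x < p then 1 else 0 := by
  have hfract := Int.fract_nonneg x
  have hfract' := Int.fract_lt_one x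
  rw [Int.fract] at hfract hfract'
  split_ifs with h
  · rw [Int.fract] at h
    have : ⌊x - p⌋ = ⌊x⌋ - 1 := by
      rw [Int.floor_eq_iff]
      push_cast
      constructor <;> linarith
    omega
  · rw [Int.fract, not_lt] at h
    have : ⌊x - p⌋ = ⌊x⌋ := by
      rw [Int.floor_eq_iff]
      constructor <;> linarith
    omega

theorem card_filter_fract_sub_lt_eq_floor_sub {N : ℕ} {π c : ℕ → ℝ}
    (hπ : ∀ k < N, π k ∈ Set.Icc (0:ℝ) 1) (hc : ∀ k < N, c (k + 1) = c k + π k) (x : ℝ) :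
    (((Finset.range N).filter fun k => Int.fract (x - c k) < π k).card : ℤ)
      = ⌊x - c 0⌋ - ⌊x - c N⌋ := by
  have hstep : ∀ k ∈ Finset.range N,
      ⌊x - c k⌋ - ⌊x - c (k + 1)⌋ = if Int.fract (x - c k) < π k then 1 else 0 := by
    intro k hk
    have hk := Finset.mem_range.mp hk
    rw [hc k hk, ← sub_sub]
    exact Int.floor_sub_floor_sub_eq_ite (hπ k hk).1 (hπ k hk).2
  rw [Finset.card_filter, Nat.cast_sum, ← Finset.sum_range_sub' (fun k => ⌊x - c k⌋),
    Finset.sum_congr rfl hstep]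
  push_cast
  rfl

open MeasureTheory Classical in
theorem stmt_3_general (N n : ℕ) (π : ℕ → ℝ)
    (hπ : ∀ k < N, π k ∈ Set.Icc (0:ℝ) 1)
    (c : ℕ → ℝ) (hc : ∀ k, c k = ∑ j ∈ Finset.range k, π j)
    (B : ℕ → Set ℝ)
    (hB : ∀ k, B k = {x ∈ Set.Ico (0:ℝ) 1 | Int.fract (x - c k) < π k})
    (hsum : c N = n) :
    ∀ᵐ r ∂(volume.restrict (Set.Ico (0:ℝ) 1)),
      ((Finset.range N).filter (fun k => r ∈ B k)).card = n := by
  filter_upwards [ae_restrict_mem measurableSet_Ico] with r hr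
  have hfilter : (Finset.range N).filter (fun k => r ∈ B k)
      = (Finset.range N).filter (fun k => Int.fract (r - c k) < π k) := by
    simp only [hB, Set.mem_ofPred_eq, hr, true_and]
  have hcum : ∀ k < N, c (k + 1) = c k + π k := fun k _ => by
    rw [hc, hc, Finset.sum_range_succ]
  have hfloor : ⌊r⌋ = 0 := Int.floor_eq_zero_iff.mpr hr
  have hcount := card_filter_fract_sub_lt_eq_floor_sub hπ hcum r
  rw [hc 0, Finset.sum_range_zero, sub_zero, hfloor, hsum, Int.floor_sub_natCast, hfloor] at hcount
  rw [hfilter]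
  omega

open MeasureTheory Classical in
/-- Madow cumulative arrangement: if the inclusion probabilities sum to a
positive integer `n`, then for `r` uniform on `[0,1)` the sample size equals
`n` with probability 1.  Unit `k`'s bar is the wrapped interval of length
`π k` starting at `c k mod 1`, where `c k = π 0 + ⋯ + π (k-1)`: a point
`x ∈ [0,1)` lies in the bar iff `fract (x - c k) < π k`. -/
theorem stmt_3 (N n : ℕ) (hn : 1 ≤ n) (π : ℕ → ℝ)
    (hπ : ∀ k < N, π k ∈ Set.Icc (0:ℝ) 1)
    (c : ℕ → ℝ) (hc : ∀ k, c k = ∑ j ∈ Finset.range k, π j)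
    (B : ℕ → Set ℝ)
    (hB : ∀ k, B k = {x ∈ Set.Ico (0:ℝ) 1 | Int.fract (x - c k) < π k})
    (hsum : c N = n) :
    ∀ᵐ r ∂(volume.restrict (Set.Ico (0:ℝ) 1)),
      ((Finset.range N).filter (fun k => r ∈ B k)).card = n :=
  stmt_3_general N n π hπ c hc B hB hsum
end

section
/- If all second-order inclusion probabilities π_{kℓ} are strictly positive, then the Horvitz–Thompson variance estimator v̂(s) = Σ_{k∈s} Σ_{ℓ∈s} (y_k/π_k)(y_ℓ/π_ℓ)(π_{kℓ} − π_k π_ℓ)/π_{kℓ} is an unbiased estimator of Var(Ŷ): its design expectation equals Σ_k Σ_ℓ (y_k/π_k)(y_ℓ/π_ℓ)(π_{kℓ} − π_k π_ℓ). -/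
open Classical in
/-- If all second-order inclusion probabilities are positive, the
Horvitz–Thompson variance estimator is design-unbiased for the variance of
the Horvitz–Thompson estimator. -/
theorem stmt_7 (N T : ℕ) (y : Fin N → ℝ) (s : Fin T → Finset (Fin N))
    (p : Fin T → ℝ) (hp : ∀ t, 0 ≤ p t) (hsum : ∑ t, p t = 1)
    (π : Fin N → ℝ)
    (hπ : ∀ k, π k = ∑ t, if k ∈ s t then p t else 0)
    (hπpos : ∀ k, 0 < π k)
    (π₂ : Fin N → Fin N → ℝ)
    (hπ₂ : ∀ k l, π₂ k l = ∑ t, if k ∈ s t ∧ l ∈ s t then p t else 0)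
    (hπ₂pos : ∀ k l, 0 < π₂ k l) :
    ∑ t, p t * (∑ k ∈ s t, ∑ l ∈ s t,
        (y k / π k) * (y l / π l) * (π₂ k l - π k * π l) / π₂ k l)
      = ∑ k, ∑ l, (y k / π k) * (y l / π l) * (π₂ k l - π k * π l) := by
  set f : Fin N → Fin N → ℝ := fun k l =>
    (y k / π k) * (y l / π l) * (π₂ k l - π k * π l) / π₂ k l with hf
  have h1 : ∀ t : Fin T,
      p t * (∑ k ∈ s t, ∑ l ∈ s t, f k l)
        = ∑ k, ∑ l, (if k ∈ s t ∧ l ∈ s t then p t else 0) * f k l := by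
    intro t
    rw [Finset.mul_sum]
    rw [← Finset.sum_subset (Finset.subset_univ (s t))]
    · refine Finset.sum_congr rfl fun k hk => ?_
      rw [Finset.mul_sum, ← Finset.sum_subset (Finset.subset_univ (s t))]
      · exact Finset.sum_congr rfl fun l hl => by simp [hk, hl]
      · intro l _ hl; simp [hl]
    · intro k _ hk
      simp [hk]
  calc ∑ t, p t * (∑ k ∈ s t, ∑ l ∈ s t, f k l)
      = ∑ t, ∑ k, ∑ l, (if k ∈ s t ∧ l ∈ s t then p t else 0) * f k l := by
        exact Finset.sum_congr rfl fun t _ => h1 t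
    _ = ∑ k, ∑ l, ∑ t, (if k ∈ s t ∧ l ∈ s t then p t else 0) * f k l := by
        rw [Finset.sum_comm]
        exact Finset.sum_congr rfl fun k _ => Finset.sum_comm
    _ = ∑ k, ∑ l, π₂ k l * f k l := by
        refine Finset.sum_congr rfl fun k _ => Finset.sum_congr rfl fun l _ => ?_
        rw [hπ₂, Finset.sum_mul]
    _ = ∑ k, ∑ l, (y k / π k) * (y l / π l) * (π₂ k l - π k * π l) := by
        refine Finset.sum_congr rfl fun k _ => Finset.sum_congr rfl fun l _ => ?_
        rw [hf, mul_comm, div_mul_cancel₀ _ (hπ₂pos k l).ne']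
end

section
/- Interchange step preserves first-order inclusion probabilities (random-size version): given a design p over samples, indices i ≠ j with p_i, p_j > 0, a unit k ∈ s_i \ s_j, and v with 0 < v ≤ min(p_i, p_j), the new design assigning probability p_i − v to s_i, v to s_i \ {k}, p_j − v to s_j, and v to s_j ∪ {k} (all other samples unchanged) has the same first-order inclusion probabilities π_ℓ for every unit ℓ. -/
open Classical in
/-- The interchange (splitting) step of chaotic GFS preserves first-order
inclusion probabilities: moving mass `v` of unit `k` from sample `sᵢ` to
sample `sⱼ` leaves every `π_ℓ` unchanged. -/
theorem stmt_11 (N : ℕ) (p : Finset (Fin N) → ℝ)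
    (hp : ∀ s, 0 ≤ p s) (hsum : ∑ s, p s = 1)
    (si sj : Finset (Fin N)) (hpi : 0 < p si) (hpj : 0 < p sj)
    (k : Fin N) (hki : k ∈ si) (hkj : k ∉ sj)
    (v : ℝ) (hv : 0 < v) (hvle : v ≤ min (p si) (p sj))
    (q : Finset (Fin N) → ℝ)
    (hq : ∀ s, q s = p s
        + v * ((if s = si.erase k then 1 else 0) + (if s = insert k sj then 1 else 0)
             - (if s = si then 1 else 0) - (if s = sj then 1 else 0)))
    (l : Fin N) :
    ∑ s ∈ Finset.univ.filter (fun s => l ∈ s), q s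
      = ∑ s ∈ Finset.univ.filter (fun s => l ∈ s), p s := by
  have key : ∀ t : Finset (Fin N),
      ∑ s ∈ Finset.univ.filter (fun s => l ∈ s), (if s = t then (1:ℝ) else 0)
        = if l ∈ t then 1 else 0 := by
    intro t
    rw [Finset.sum_ite_eq' (Finset.univ.filter (fun s => l ∈ s)) t (fun _ => (1:ℝ))]
    simp
  simp only [hq, Finset.sum_add_distrib, ← Finset.mul_sum]
  have : ∑ s ∈ Finset.univ.filter (fun s => l ∈ s),
      ((if s = si.erase k then (1:ℝ) else 0) + (if s = insert k sj then 1 else 0)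
        - (if s = si then 1 else 0) - (if s = sj then 1 else 0)) = 0 := by
    simp only [sub_eq_add_neg, Finset.sum_add_distrib, Finset.sum_neg_distrib, key]
    by_cases h : l = k
    · subst h
      simp [hki, hkj, Finset.mem_erase]
    · simp [Finset.mem_erase, Finset.mem_insert, h]
  rw [this, mul_zero, add_zero]
end

section
/- Interchange step preserves both first-order inclusion probabilities and fixed sample size: given a fixed-size-n design p, samples s_i, s_j with p_i, p_j > 0, units k ∈ s_i \ s_j and ℓ ∈ s_j \ s_i, and 0 < v ≤ min(p_i, p_j), the new design assigning p_i − v to s_i, v to (s_i ∪ {ℓ}) \ {k}, p_j − v to s_j, and v to (s_j ∪ {k}) \ {ℓ} has the same inclusion probabilities π_m for all m ∈ U, and all samples in its support still have cardinality n. -/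
open Classical in
/-- The fixed-size interchange step of chaotic GFS preserves the first-order
inclusion probabilities of every unit and keeps all samples in the support of
cardinality `n`. -/
theorem stmt_12 (N n : ℕ) (p : Finset (Fin N) → ℝ)
    (hp : ∀ s, 0 ≤ p s) (hsum : ∑ s, p s = 1)
    (hfixed : ∀ s, p s ≠ 0 → s.card = n)
    (si sj : Finset (Fin N)) (hpi : 0 < p si) (hpj : 0 < p sj)
    (k : Fin N) (hki : k ∈ si) (hkj : k ∉ sj)
    (l : Fin N) (hlj : l ∈ sj) (hli : l ∉ si)
    (v : ℝ) (hv : 0 < v) (hvle : v ≤ min (p si) (p sj))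
    (q : Finset (Fin N) → ℝ)
    (hq : ∀ s, q s = p s
        + v * ((if s = insert l (si.erase k) then 1 else 0)
             + (if s = insert k (sj.erase l) then 1 else 0)
             - (if s = si then 1 else 0) - (if s = sj then 1 else 0))) :
    (∀ m : Fin N,
        ∑ s ∈ Finset.univ.filter (fun s => m ∈ s), q s
          = ∑ s ∈ Finset.univ.filter (fun s => m ∈ s), p s)
      ∧ (∀ s, q s ≠ 0 → s.card = n) := by
  have hni : si.card = n := hfixed si hpi.ne'
  have hnj : sj.card = n := hfixed sj hpj.ne'
  have hn1 : 1 ≤ n := hni ▸ Finset.card_pos.mpr ⟨k, hki⟩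
  constructor
  · intro m
    have key : ∀ t : Finset (Fin N),
        ∑ s ∈ Finset.univ.filter (fun s => m ∈ s), (if s = t then (1:ℝ) else 0)
          = if m ∈ t then 1 else 0 := by
      intro t
      rw [Finset.sum_ite_eq']
      simp
    simp only [hq, Finset.sum_add_distrib, ← Finset.mul_sum,
      Finset.sum_sub_distrib, key]
    have hz : ((if m ∈ insert l (si.erase k) then (1:ℝ) else 0)
        + (if m ∈ insert k (sj.erase l) then 1 else 0)
        - (if m ∈ si then 1 else 0) - (if m ∈ sj then 1 else 0)) = 0 := by
      by_cases hmk : m = k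
      · subst hmk
        have hkl : m ≠ l := fun h => hli (h ▸ hki)
        simp [Finset.mem_insert, Finset.mem_erase, hki, hkj, hkl]
      · by_cases hml : m = l
        · subst hml
          simp [Finset.mem_insert, Finset.mem_erase, hli, hlj, hmk]
        · by_cases hmi : m ∈ si <;> by_cases hmj : m ∈ sj <;>
            simp [Finset.mem_insert, Finset.mem_erase, hmi, hmj, hmk, hml]
    rw [hz]
    ring
  · intro s hs
    by_cases h1 : s = insert l (si.erase k)
    · subst h1
      rw [Finset.card_insert_of_notMem (fun h => hli (Finset.mem_of_mem_erase h)),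
        Finset.card_erase_of_mem hki, hni]
      omega
    · by_cases h2 : s = insert k (sj.erase l)
      · subst h2
        rw [Finset.card_insert_of_notMem (fun h => hkj (Finset.mem_of_mem_erase h)),
          Finset.card_erase_of_mem hlj, hnj]
        omega
      · by_cases h3 : s = si
        · subst h3; exact hni
        · by_cases h4 : s = sj
          · subst h4; exact hnj
          · apply hfixed
            rw [hq s] at hs
            simpa [h1, h2, h3, h4] using hs
end

section
/- For a design p with fixed size n, the variance of the Horvitz–Thompson estimator can be written in the Sen–Yates–Grundy form: Var(Ŷ) = (1/2) Σ_{k∈U} Σ_{ℓ∈U} (y_k/π_k − y_ℓ/π_ℓ)² (π_k π_ℓ − π_{kℓ}). -/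
open Classical in
/-- For a fixed-size design, the variance of the Horvitz–Thompson estimator
equals the Sen–Yates–Grundy form. -/
theorem stmt_18 (N T n : ℕ) (y : Fin N → ℝ) (s : Fin T → Finset (Fin N))
    (p : Fin T → ℝ) (hp : ∀ t, 0 ≤ p t) (hsum : ∑ t, p t = 1)
    (hfixed : ∀ t, p t ≠ 0 → (s t).card = n)
    (π : Fin N → ℝ)
    (hπ : ∀ k, π k = ∑ t, if k ∈ s t then p t else 0)
    (hπpos : ∀ k, 0 < π k)
    (π₂ : Fin N → Fin N → ℝ)
    (hπ₂ : ∀ k l, π₂ k l = ∑ t, if k ∈ s t ∧ l ∈ s t then p t else 0)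
    (HT : Fin T → ℝ) (hHT : ∀ t, HT t = ∑ k ∈ s t, y k / π k) :
    ∑ t, p t * (HT t - ∑ t', p t' * HT t') ^ 2
      = (1 / 2) * ∑ k, ∑ l,
          (y k / π k - y l / π l) ^ 2 * (π k * π l - π₂ k l) := by
  set z : Fin N → ℝ := fun k => y k / π k with hz
  -- sums over s t as indicator sums over univ
  have hsum_ite : ∀ (t : Fin T) (f : Fin N → ℝ),
      ∑ k ∈ s t, f k = ∑ k, if k ∈ s t then f k else 0 := by
    intro t f
    rw [Finset.sum_ite_mem, Finset.univ_inter]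
  -- p t * card = p t * n
  have hcard : ∀ t, p t * ((s t).card : ℝ) = p t * n := by
    intro t
    by_cases h : p t = 0
    · simp [h]
    · rw [hfixed t h]
  -- sum of first-order inclusion probabilities is n
  have hπsum : ∑ l, π l = (n : ℝ) := by
    simp only [hπ]
    rw [Finset.sum_comm]
    have h1 : ∀ t : Fin T, (∑ l, if l ∈ s t then p t else 0) = p t * (s t).card := by
      intro t
      rw [Finset.sum_ite_mem, Finset.univ_inter, Finset.sum_const, nsmul_eq_mul,
        mul_comm]
    calc (∑ t, ∑ l, if l ∈ s t then p t else 0) = ∑ t, p t * ((s t).card : ℝ) := by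
          exact Finset.sum_congr rfl fun t _ => h1 t
      _ = ∑ t, p t * n := Finset.sum_congr rfl fun t _ => hcard t
      _ = (∑ t, p t) * n := by rw [Finset.sum_mul]
      _ = (n : ℝ) := by rw [hsum, one_mul]
  -- row sums of π₂
  have hπ₂sum : ∀ k, ∑ l, π₂ k l = (n : ℝ) * π k := by
    intro k
    simp only [hπ₂]
    rw [Finset.sum_comm]
    have h1 : ∀ t : Fin T, (∑ l, if k ∈ s t ∧ l ∈ s t then p t else 0)
        = (if k ∈ s t then p t * n else 0) := by
      intro t
      by_cases hk : k ∈ s t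
      · simp only [hk, true_and, if_true]
        rw [Finset.sum_ite_mem, Finset.univ_inter, Finset.sum_const, nsmul_eq_mul,
          mul_comm, hcard]
      · simp [hk]
    rw [Finset.sum_congr rfl fun t _ => h1 t, hπ, Finset.mul_sum]
    exact Finset.sum_congr rfl fun t _ => by by_cases hk : k ∈ s t <;> simp [hk] <;> ring
  -- row sum of Δ is zero
  have hrow : ∀ k, ∑ l, (π k * π l - π₂ k l) = 0 := by
    intro k
    rw [Finset.sum_sub_distrib, ← Finset.mul_sum, hπsum, hπ₂sum]
    ring
  have hπ₂symm : ∀ k l, π₂ k l = π₂ l k := by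
    intro k l
    rw [hπ₂, hπ₂]
    exact Finset.sum_congr rfl fun t _ => by
      by_cases hk : k ∈ s t <;> by_cases hl : l ∈ s t <;> simp [hk, hl]
  have hcol : ∀ l, ∑ k, (π k * π l - π₂ k l) = 0 := by
    intro l
    calc ∑ k, (π k * π l - π₂ k l) = ∑ k, (π l * π k - π₂ l k) := by
          exact Finset.sum_congr rfl fun k _ => by rw [hπ₂symm, mul_comm]
      _ = 0 := hrow l
  -- expectation of HT
  have hE1 : ∑ t, p t * HT t = ∑ k, z k * π k := by
    have h1 : ∀ t, p t * HT t = ∑ k, z k * (if k ∈ s t then p t else 0) := by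
      intro t
      rw [hHT, hsum_ite, Finset.mul_sum]
      refine Finset.sum_congr rfl fun k _ => ?_
      by_cases hk : k ∈ s t <;> simp [hk] <;> ring
    rw [Finset.sum_congr rfl fun t _ => h1 t, Finset.sum_comm]
    refine Finset.sum_congr rfl fun k _ => ?_
    rw [← Finset.mul_sum, ← hπ]
  -- second moment of HT
  have hE2 : ∑ t, p t * HT t ^ 2 = ∑ k, ∑ l, z k * z l * π₂ k l := by
    have h1 : ∀ t, p t * HT t ^ 2
        = ∑ k, ∑ l, z k * z l * (if k ∈ s t ∧ l ∈ s t then p t else 0) := by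
      intro t
      rw [hHT, sq, Finset.sum_mul_sum, Finset.mul_sum, hsum_ite t]
      refine Finset.sum_congr rfl fun k _ => ?_
      by_cases hk : k ∈ s t
      · simp only [hk, if_true]
        rw [Finset.mul_sum, hsum_ite t]
        refine Finset.sum_congr rfl fun l _ => ?_
        by_cases hl : l ∈ s t <;> simp [hk, hl] <;> ring
      · simp [hk]
    rw [Finset.sum_congr rfl fun t _ => h1 t, Finset.sum_comm]
    refine Finset.sum_congr rfl fun k _ => ?_
    rw [Finset.sum_comm]
    refine Finset.sum_congr rfl fun l _ => ?_
    rw [hπ₂ k l, Finset.mul_sum]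
  -- variance expansion
  have hvar : ∑ t, p t * (HT t - ∑ t', p t' * HT t') ^ 2
      = ∑ t, p t * HT t ^ 2 - (∑ t, p t * HT t) ^ 2 := by
    set μ : ℝ := ∑ t', p t' * HT t' with hμ
    have hexp : ∀ t, p t * (HT t - μ) ^ 2
        = p t * HT t ^ 2 - 2 * μ * (p t * HT t) + μ ^ 2 * p t := by
      intro t; ring
    rw [Finset.sum_congr rfl fun t _ => hexp t]
    rw [Finset.sum_add_distrib, Finset.sum_sub_distrib, ← Finset.mul_sum,
      ← Finset.mul_sum, hsum]
    ring
  rw [hvar, hE2, hE1]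
  have hμsq : (∑ k, z k * π k) ^ 2 = ∑ k, ∑ l, z k * z l * (π k * π l) := by
    rw [sq, Finset.sum_mul_sum]
    exact Finset.sum_congr rfl fun k _ => Finset.sum_congr rfl fun l _ => by ring
  rw [hμsq, ← Finset.sum_sub_distrib]
  simp only [← Finset.sum_sub_distrib]
  have hLHS : ∑ k, ∑ l, (z k * z l * π₂ k l - z k * z l * (π k * π l))
      = - ∑ k, ∑ l, z k * z l * (π k * π l - π₂ k l) := by
    rw [← Finset.sum_neg_distrib]
    refine Finset.sum_congr rfl fun k _ => ?_
    rw [← Finset.sum_neg_distrib]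
    exact Finset.sum_congr rfl fun l _ => by ring
  rw [hLHS]
  -- expand the SYG form
  have hRHS : ∑ k, ∑ l, (z k - z l) ^ 2 * (π k * π l - π₂ k l)
      = ∑ k, ∑ l, (z k ^ 2 * (π k * π l - π₂ k l)
        + z l ^ 2 * (π k * π l - π₂ k l)
        - 2 * (z k * z l * (π k * π l - π₂ k l))) := by
    exact Finset.sum_congr rfl fun k _ => Finset.sum_congr rfl fun l _ => by ring
  have hterm1 : ∑ k, ∑ l, z k ^ 2 * (π k * π l - π₂ k l) = 0 := by
    refine Finset.sum_eq_zero fun k _ => ?_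
    rw [← Finset.mul_sum, hrow k, mul_zero]
  have hterm2 : ∑ k, ∑ l, z l ^ 2 * (π k * π l - π₂ k l) = 0 := by
    rw [Finset.sum_comm]
    refine Finset.sum_eq_zero fun l _ => ?_
    rw [← Finset.mul_sum, hcol l, mul_zero]
  show _ = (1:ℝ)/2 * ∑ k, ∑ l, (z k - z l) ^ 2 * (π k * π l - π₂ k l)
  rw [hRHS]
  simp only [Finset.sum_sub_distrib, Finset.sum_add_distrib]
  rw [hterm1, hterm2]
  have h2 : ∑ k, ∑ l, 2 * (z k * z l * (π k * π l - π₂ k l))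
      = 2 * ∑ k, ∑ l, z k * z l * (π k * π l - π₂ k l) := by
    rw [Finset.mul_sum]
    exact Finset.sum_congr rfl fun k _ => (Finset.mul_sum _ _ _).symm
  rw [h2]
  ring
end
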